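/- arXiv:1301.3419 — 2 statements merged into one kernel-verified Lean document; each statement's English description precedes it below -/
import Mathlib

section
/- (Generalized Composition Formula.) Fix λ ∈ ℝ and functions f : ℕ → ℝ and g : ℕ → ℝ with g(0) = 1. Define h : ℕ → ℝ by h(0) = 1 and, for n > 0, h(n) = Σ_{k=1}^{n} Σ λ^{(#B₁ + ⋯ + #B_k) − n} · f(#B₁) ⋯ f(#B_k) · g(k), where the inner sum is over all generalized partitions (B₁,…,B_k) of [n] with k blocks. Then for every n ∈ ℕ, h(n) = Σ_{k=0}^{n} g(k) · f^{[k]}(n). -/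
/-- The weight-`lam` product on functions `ℕ → ℝ`. -/
noncomputable def starMul (lam : ℝ) (a b : ℕ → ℝ) : ℕ → ℝ := fun u =>
  ∑ p ∈ Finset.HasAntidiagonal.antidiagonal u, ∑ q ∈ Finset.HasAntidiagonal.antidiagonal p.2,
    lam ^ p.1 * ((Nat.factorial u : ℝ) /
      ((Nat.factorial p.1 : ℝ) * (Nat.factorial q.1 : ℝ) * (Nat.factorial q.2 : ℝ))) *
      a (p.1 + q.1) * b (p.1 + q.2)

/-- `δ_k : ℕ → ℝ`. -/
noncomputable def delta (k : ℕ) : ℕ → ℝ := fun m => if m = k then 1 else 0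

/-- The shift operator `d`: `d(a)(n) = a(n+1)`. -/
noncomputable def dOp (a : ℕ → ℝ) : ℕ → ℝ := fun n => a (n + 1)

/-- The shift operator `P`: `P(a)(0) = 0` and `P(a)(n) = a(n−1)` for `n ≥ 1`. -/
noncomputable def pOp (a : ℕ → ℝ) : ℕ → ℝ := fun n =>
  match n with
  | 0 => 0
  | m + 1 => a m

/-- The divided powers: `f^{[0]} = δ₀` and `f^{[k]} = P(f^{[k−1]} ⋆ d(f))` for `k ≥ 1`. -/
noncomputable def divPow (lam : ℝ) (f : ℕ → ℝ) : ℕ → ℕ → ℝ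
  | 0 => delta 0
  | k + 1 => pOp (starMul lam (divPow lam f k) (dOp f))

/-!
Let `W_k(S)` be the weighted sum over generalized partitions of a finite linearly ordered set `S`
into `k` blocks. The block containing `max S` has the largest maximum, so it is the last block `L`;
deleting it leaves a generalized partition of some `C ⊆ S \ {max S}`, and `L` ranges over the sets
with `S \ C ⊆ L ⊆ S`, each contributing `λ^{|C ∩ L|} f(|L|)`. Hence
`W_{k+1}(S) = Σ_C W_k(C) Σ_L λ^{|C ∩ L|} f(|L|)`, and counting `C` and `L ∩ C` by their sizes turns
this into the recursion `f^{[k+1]} = P(f^{[k]} ⋆ d f)` with the multinomial coefficient of `⋆`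
split into two binomials. By induction `W_k(S) = f^{[k]}(|S|)`, and the theorem is `S = [n]`.
-/

open Finset

theorem choose_mul_choose_eq_factorial_div {m s i : ℕ} (hs : s ≤ m) (hi : i ≤ s) :
    (m.choose s * s.choose i : ℝ) =
      m.factorial / (i.factorial * (s - i).factorial * (m - s).factorial) := by
  rw [Nat.cast_choose ℝ hs, Nat.cast_choose ℝ hi]
  field_simp

/-- In the notation of the definition of `starMul`, `s = u₁ + u₂` and `i = u₁`. -/
theorem starMul_eq_sum_choose (lam : ℝ) (x y : ℕ → ℝ) (m : ℕ) :
    starMul lam x y m = ∑ s ∈ range (m + 1), ∑ i ∈ range (s + 1),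
      (m.choose s * s.choose i : ℝ) * lam ^ i * x s * y (m - s + i) := by
  set F : ℕ → ℕ → ℝ := fun i t => lam ^ i *
    (m.factorial / (i.factorial * t.factorial * (m - i - t).factorial)) * x (i + t) *
      y (i + (m - i - t))
  calc starMul lam x y m = ∑ i ∈ range (m + 1), ∑ t ∈ range (m + 1 - i), F i t := by
        simp only [starMul, Nat.sum_antidiagonal_eq_sum_range_succ_mk]
        refine sum_congr rfl fun i hi => ?_
        rw [Nat.sub_add_comm (Nat.lt_succ_iff.mp (mem_range.mp hi))]
    _ = ∑ s ∈ range (m + 1), ∑ i ∈ range (s + 1), F i (s - i) :=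
        (sum_range_diag_flip _ _).symm
    _ = _ := by
        refine sum_congr rfl fun s hs => sum_congr rfl fun i hi => ?_
        have hs : s ≤ m := Nat.lt_succ_iff.mp (mem_range.mp hs)
        have hi : i ≤ s := Nat.lt_succ_iff.mp (mem_range.mp hi)
        rw [choose_mul_choose_eq_factorial_div hs hi]
        simp only [F, Nat.add_sub_cancel' hi, show m - i - (s - i) = m - s by omega,
          show i + (m - s) = m - s + i by omega]
        ring

theorem divPow_succ_succ (lam : ℝ) (f : ℕ → ℝ) (k m : ℕ) :
    divPow lam f (k + 1) (m + 1) = ∑ s ∈ range (m + 1), ∑ i ∈ range (s + 1),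
      (m.choose s * s.choose i : ℝ) * lam ^ i * divPow lam f k s * f (m - s + i + 1) :=
  starMul_eq_sum_choose lam (divPow lam f k) (dOp f) m

theorem divPow_zero_of_ne_zero (lam : ℝ) (f : ℕ → ℝ) {n : ℕ} (hn : n ≠ 0) :
    divPow lam f 0 n = 0 :=
  if_neg hn

theorem Finset.sum_Icc_sdiff_eq_sum_choose {β M : Type*} [DecidableEq β] [AddCommMonoid M]
    {C S : Finset β} (hC : C ⊆ S) (G : ℕ → ℕ → M) :
    ∑ L ∈ Icc (S \ C) S, G #(C ∩ L) #L =
      ∑ i ∈ range (#C + 1), (#C).choose i • G i (#S - #C + i) := by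
  have hinter : ∀ D ⊆ C, C ∩ (S \ C ∪ D) = D := fun D hD => by
    rw [inter_union_distrib_left, inter_sdiff_self, empty_union, inter_eq_right.2 hD]
  rw [Icc_eq_image_powerset sdiff_subset, sdiff_sdiff_eq_self hC, sum_image,
    ← sum_powerset_apply_card]
  · refine sum_congr rfl fun D hD => ?_
    rw [mem_powerset] at hD
    rw [hinter D hD, card_union_of_disjoint (disjoint_sdiff_self_left.mono_right hD),
      card_sdiff_of_subset hC]
  · intro D₁ hD₁ D₂ hD₂ h
    rw [← hinter D₁ (mem_powerset.1 hD₁), ← hinter D₂ (mem_powerset.1 hD₂)]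
    exact congrArg (C ∩ ·) h

theorem Finset.max_lt_coe_iff {α : Type*} [LinearOrder α] {B : Finset α} {M : α} :
    B.max < M ↔ ∀ x ∈ B, x < M := by
  simp [max_eq_sup_coe, Finset.sup_lt_iff (WithBot.bot_lt_coe M)]

theorem Fin.strictMono_snoc_iff {β : Type*} [Preorder β] {k : ℕ} (g : Fin k → β) (y : β) :
    StrictMono (Fin.snoc g y : Fin (k + 1) → β) ↔ StrictMono g ∧ ∀ i, g i < y := by
  refine ⟨fun h => ⟨fun i j hij => ?_, fun i => ?_⟩, fun ⟨hg, hy⟩ => ?_⟩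
  · simpa using h (Fin.castSucc_lt_castSucc_iff.mpr hij)
  · simpa using h (Fin.castSucc_lt_last i)
  · intro i j hij
    induction j using Fin.lastCases with
    | last =>
      obtain ⟨i, rfl⟩ := Fin.exists_castSucc_eq.mpr hij.ne
      simpa using hy i
    | cast j =>
      obtain ⟨i, rfl⟩ := Fin.exists_castSucc_eq.mpr (hij.trans (Fin.castSucc_lt_last j)).ne
      simpa using hg (Fin.castSucc_lt_castSucc_iff.mp hij)

theorem Fin.univ_biUnion_snoc {α : Type*} [DecidableEq α] {k : ℕ} (B : Fin k → Finset α)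
    (L : Finset α) :
    univ.biUnion (Fin.snoc B L : Fin (k + 1) → Finset α) = univ.biUnion B ∪ L := by
  ext x
  simp [Fin.exists_fin_succ']

section GenPartition

variable {α : Type*} [LinearOrder α] {k : ℕ}

def IsGenPartition (S : Finset α) (B : Fin k → Finset α) : Prop :=
  (∀ i, (B i).Nonempty) ∧ univ.biUnion B = S ∧ StrictMono fun i => (B i).max

instance (S : Finset α) : DecidablePred (IsGenPartition (k := k) S) := fun _ =>
  inferInstanceAs (Decidable (_ ∧ _ ∧ ∀ _ _, _))

def genPartitionWeight (lam : ℝ) (f : ℕ → ℝ) (S : Finset α) (B : Fin k → Finset α) : ℝ :=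
  lam ^ (∑ i, #(B i) - #S) * ∏ i, f #(B i)

/-- The inner sum of the theorem, with `[n]` replaced by any finite set `S`. -/
def genPartitionSum [Fintype α] (lam : ℝ) (f : ℕ → ℝ) (k : ℕ) (S : Finset α) : ℝ :=
  ∑ B ∈ univ.filter (IsGenPartition (k := k) S), genPartitionWeight lam f S B

theorem isGenPartition_zero_iff (S : Finset α) (B : Fin 0 → Finset α) :
    IsGenPartition S B ↔ S = ∅ := by
  simp [IsGenPartition, eq_comm (a := ∅), Subsingleton.strictMono]

theorem not_isGenPartition_empty (B : Fin (k + 1) → Finset α) : ¬ IsGenPartition ∅ B :=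
  fun ⟨hne, hU, _⟩ =>
    (hne 0).ne_empty (subset_empty.mp (hU ▸ subset_biUnion_of_mem B (mem_univ 0)))

theorem isGenPartition_snoc_iff {S : Finset α} (hS : S.Nonempty) (B : Fin k → Finset α)
    (L : Finset α) :
    IsGenPartition S (Fin.snoc B L : Fin (k + 1) → Finset α) ↔
      IsGenPartition (univ.biUnion B) B ∧ univ.biUnion B ⊆ S.erase (S.max' hS) ∧
        L ∈ Icc (S \ univ.biUnion B) S := by
  have hmax : (fun i => (Fin.snoc (α := fun _ => Finset α) B L i).max) =
      Fin.snoc (α := fun _ => WithBot α) (fun i => (B i).max) L.max := by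
    ext1 i
    induction i using Fin.lastCases <;> simp
  simp only [IsGenPartition, Fin.forall_fin_succ', Fin.snoc_castSucc, Fin.snoc_last,
    Fin.univ_biUnion_snoc, hmax, Fin.strictMono_snoc_iff, mem_Icc]
  set M := S.max' hS
  set U := univ.biUnion B
  constructor
  · rintro ⟨⟨hne, -⟩, hUL, hmono, hlt⟩
    have hLS : L ⊆ S := hUL ▸ subset_union_right
    refine ⟨⟨hne, trivial, hmono⟩, fun x hx => mem_erase.2 ⟨?_, hUL ▸ mem_union_left L hx⟩,
      hUL ▸ union_sdiff_left U L ▸ sdiff_subset, hLS⟩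
    rintro rfl
    obtain ⟨i, -, hi⟩ := mem_biUnion.1 hx
    have := (le_max hi).trans_lt ((hlt i).trans_le (max_mono hLS))
    rw [← coe_max' hS] at this
    exact lt_irrefl _ this
  · rintro ⟨⟨hne, -, hmono⟩, hUS, hSL, hLS⟩
    have hML : M ∈ L := hSL (mem_sdiff.2 ⟨max'_mem S hS, fun h => notMem_erase M S (hUS h)⟩)
    have hLmax : L.max = M := le_antisymm (coe_max' hS ▸ max_mono hLS) (le_max hML)
    refine ⟨⟨hne, ⟨M, hML⟩⟩, ?_, hmono, fun i => ?_⟩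
    · exact subset_antisymm (union_subset (hUS.trans (erase_subset M S)) hLS) (sdiff_le_iff.1 hSL)
    · rw [hLmax, max_lt_coe_iff]
      exact fun x hx => lt_max'_of_mem_erase_max' S hS (hUS (mem_biUnion.2 ⟨i, mem_univ i, hx⟩))

theorem genPartitionWeight_snoc (lam : ℝ) (f : ℕ → ℝ) {S L : Finset α} (B : Fin k → Finset α)
    (hS : univ.biUnion B ∪ L = S) :
    genPartitionWeight lam f S (Fin.snoc B L : Fin (k + 1) → Finset α) =
      lam ^ #(univ.biUnion B ∩ L) * f #L * genPartitionWeight lam f (univ.biUnion B) B := by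
  have hexp :
      ∑ i, #(B i) + #L - #S = ∑ i, #(B i) - #(univ.biUnion B) + #(univ.biUnion B ∩ L) := by
    have := card_union_add_card_inter (univ.biUnion B) L
    have := card_biUnion_le (s := univ) (t := B)
    rw [hS] at *
    omega
  simp only [genPartitionWeight, Fin.sum_univ_castSucc, Fin.prod_univ_castSucc, Fin.snoc_castSucc,
    Fin.snoc_last, hexp, pow_add]
  ring

variable [Fintype α]

theorem sum_snoc_genPartitionWeight (lam : ℝ) (f : ℕ → ℝ) {S : Finset α} (hS : S.Nonempty)
    (B : Fin k → Finset α) :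
    ∑ L, (if IsGenPartition S (Fin.snoc B L : Fin (k + 1) → Finset α) then
        genPartitionWeight lam f S (Fin.snoc B L : Fin (k + 1) → Finset α) else 0) =
      if IsGenPartition (univ.biUnion B) B ∧ univ.biUnion B ⊆ S.erase (S.max' hS) then
        genPartitionWeight lam f (univ.biUnion B) B *
          ∑ L ∈ Icc (S \ univ.biUnion B) S, lam ^ #(univ.biUnion B ∩ L) * f #L
      else 0 := by
  simp only [isGenPartition_snoc_iff hS, ite_and]
  split_ifs with hB hUS
  · rw [sum_ite_mem, univ_inter, mul_sum]
    refine sum_congr rfl fun L hL => ?_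
    obtain ⟨hSL, hLS⟩ := mem_Icc.1 hL
    have hUL : univ.biUnion B ∪ L = S :=
      subset_antisymm (union_subset (hUS.trans (erase_subset _ S)) hLS) (sdiff_le_iff.1 hSL)
    rw [genPartitionWeight_snoc lam f B hUL, mul_comm]
  all_goals exact sum_const_zero

theorem genPartitionSum_succ (lam : ℝ) (f : ℕ → ℝ) {S : Finset α} (hS : S.Nonempty) :
    genPartitionSum lam f (k + 1) S = ∑ C ∈ (S.erase (S.max' hS)).powerset,
      genPartitionSum lam f k C * ∑ L ∈ Icc (S \ C) S, lam ^ #(C ∩ L) * f #L := by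
  set S' := S.erase (S.max' hS)
  calc genPartitionSum lam f (k + 1) S
      = ∑ B : Fin k → Finset α, ∑ L, if IsGenPartition S (Fin.snoc B L : Fin (k + 1) → Finset α)
          then genPartitionWeight lam f S (Fin.snoc B L : Fin (k + 1) → Finset α) else 0 := by
        rw [genPartitionSum, sum_filter, ← (Fin.snocEquiv _).sum_comp,
          Fintype.sum_prod_type_right]
        rfl
    _ = ∑ B ∈ univ.filter fun B : Fin k → Finset α =>
          IsGenPartition (univ.biUnion B) B ∧ univ.biUnion B ⊆ S',
          genPartitionWeight lam f (univ.biUnion B) B *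
            ∑ L ∈ Icc (S \ univ.biUnion B) S, lam ^ #(univ.biUnion B ∩ L) * f #L := by
        rw [sum_filter]
        exact sum_congr rfl fun B _ => sum_snoc_genPartitionWeight lam f hS B
    _ = _ := by
        rw [← sum_fiberwise_of_maps_to (g := fun B => univ.biUnion B) (t := S'.powerset)
          fun B hB => mem_powerset.2 (mem_filter.1 hB).2.2]
        refine sum_congr rfl fun C hC => ?_
        rw [genPartitionSum, sum_mul, filter_filter]
        refine sum_congr (filter_congr fun B _ => ⟨fun ⟨⟨hB, _⟩, hU⟩ => hU ▸ hB, fun hB => ?_⟩)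
          fun B hB => by rw [(mem_filter.1 hB).2.2.1]
        rw [hB.2.1]
        exact ⟨⟨hB, mem_powerset.1 hC⟩, rfl⟩

theorem genPartitionSum_zero (lam : ℝ) (f : ℕ → ℝ) (S : Finset α) :
    genPartitionSum lam f 0 S = if S = ∅ then 1 else 0 := by
  by_cases hS : S = ∅ <;> simp [genPartitionSum, genPartitionWeight, isGenPartition_zero_iff, hS]

theorem genPartitionSum_succ_empty (lam : ℝ) (f : ℕ → ℝ) :
    genPartitionSum lam f (k + 1) (∅ : Finset α) = 0 := by
  simp [genPartitionSum, not_isGenPartition_empty]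

theorem genPartitionSum_eq_divPow (lam : ℝ) (f : ℕ → ℝ) (k : ℕ) (S : Finset α) :
    genPartitionSum lam f k S = divPow lam f k #S := by
  induction k generalizing S with
  | zero => simp [genPartitionSum_zero, divPow, delta]
  | succ k ih =>
    rcases S.eq_empty_or_nonempty with rfl | hS
    · exact genPartitionSum_succ_empty lam f
    set S' := S.erase (S.max' hS)
    have hcard : #S = #S' + 1 := (card_erase_add_one (S.max'_mem hS)).symm
    calc genPartitionSum lam f (k + 1) S
        = ∑ C ∈ S'.powerset, divPow lam f k #C *
            ∑ i ∈ range (#C + 1), (#C).choose i • (lam ^ i * f (#S - #C + i)) := by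
          rw [genPartitionSum_succ lam f hS]
          refine sum_congr rfl fun C hC => ?_
          rw [ih, sum_Icc_sdiff_eq_sum_choose ((mem_powerset.1 hC).trans (erase_subset _ S))
            fun d l => lam ^ d * f l]
      _ = ∑ s ∈ range (#S' + 1), (#S').choose s • (divPow lam f k s *
            ∑ i ∈ range (s + 1), s.choose i • (lam ^ i * f (#S - s + i))) :=
          sum_powerset_apply_card fun s => divPow lam f k s *
            ∑ i ∈ range (s + 1), s.choose i • (lam ^ i * f (#S - s + i))
      _ = divPow lam f (k + 1) #S := by
          rw [hcard, divPow_succ_succ]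
          refine sum_congr rfl fun s hs => ?_
          rw [nsmul_eq_mul, mul_sum, mul_sum]
          refine sum_congr rfl fun i _ => ?_
          rw [nsmul_eq_mul, show #S' + 1 - s + i = #S' - s + i + 1 by
            have := mem_range.1 hs; omega]
          ring

end GenPartition

/-- Generalized Composition Formula: if `g(0) = 1`, `h(0) = 1` and for `n > 0`
`h(n) = Σ_{k=1}^{n} Σ lam^{(#B₁+⋯+#B_k)−n} · f(#B₁) ⋯ f(#B_k) · g(k)`, the inner sum
over all generalized partitions `(B₁,…,B_k)` of `[n]` with `k` blocks, then
`h(n) = Σ_{k=0}^{n} g(k) · f^{[k]}(n)` for every `n`. -/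
theorem stmt15 (lam : ℝ) (f g h : ℕ → ℝ) (hg : g 0 = 1) (h0 : h 0 = 1)
    (hh : ∀ n : ℕ, 0 < n → h n =
      ∑ k ∈ Finset.Icc 1 n,
        (∑ B ∈ Finset.univ.filter (fun B : Fin k → Finset (Fin n) =>
            (∀ i, (B i).Nonempty) ∧ Finset.univ.biUnion B = Finset.univ ∧
            ∀ i j : Fin k, i < j → (B i).max < (B j).max),
          lam ^ ((∑ i, (B i).card) - n) * (∏ i, f ((B i).card)) * g k)) :
    ∀ n : ℕ, h n = ∑ k ∈ Finset.range (n + 1), g k * divPow lam f k n := by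
  intro n
  rcases n.eq_zero_or_pos with rfl | hn
  · simp [h0, hg, divPow, delta]
  have hblocks (k : ℕ) : divPow lam f k n = ∑ B ∈ univ.filter (fun B : Fin k → Finset (Fin n) =>
      (∀ i, (B i).Nonempty) ∧ univ.biUnion B = univ ∧ ∀ i j : Fin k, i < j → (B i).max < (B j).max),
        lam ^ ((∑ i, #(B i)) - n) * ∏ i, f #(B i) := by
    have := genPartitionSum_eq_divPow lam f k (univ : Finset (Fin n))
    rw [card_univ, Fintype.card_fin] at this
    rw [← this, genPartitionSum]
    refine sum_congr (filter_congr fun B _ => Iff.rfl) fun B _ => ?_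
    rw [genPartitionWeight, card_univ, Fintype.card_fin]
  rw [hh n hn]
  calc _ = ∑ k ∈ Icc 1 n, g k * divPow lam f k n :=
        sum_congr rfl fun k _ => by rw [hblocks, ← sum_mul, mul_comm]
    _ = _ := sum_subset (fun k hk => by simp only [mem_Icc, mem_range] at hk ⊢; omega)
        fun k hk hk' => by
          obtain rfl : k = 0 := by simp only [mem_Icc, mem_range] at hk hk'; omega
          rw [divPow_zero_of_ne_zero lam f hn.ne', mul_zero]
end

section
/- Let f : ℕ → ℝ be the function with f(m) = 1 for all m ≥ 1 (the value f(0) is irrelevant since only d(f) is used). Then for all integers k ≥ 1 and n ≥ 1: if λ = 0 then the k-th divided power satisfies f^{[k]}(n) = S(n,k), the Stirling number of the second kind; and if λ = 1 then f^{[k]}(n) = \overline{S}(n,k), the generalized Stirling number of the second kind. -/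
/-- The Stirling number of the second kind `S(n,k)`. -/
def stirling2 (n k : ℕ) : ℕ :=
  (Finset.univ.filter (fun π : Finset (Finset (Fin n)) =>
    π.card = k ∧ (∀ B ∈ π, B.Nonempty) ∧
    (∀ B ∈ π, ∀ C ∈ π, B ≠ C → Disjoint B C) ∧
    π.biUnion id = Finset.univ)).card

/-- The generalized Stirling number of the second kind `\overline{S}(n,k)`. -/
def gstirling (n k : ℕ) : ℕ :=
  (Finset.univ.filter (fun B : Fin k → Finset (Fin n) =>
    (∀ i, (B i).Nonempty) ∧ Finset.univ.biUnion B = Finset.univ ∧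
    ∀ i j : Fin k, i < j → (B i).max < (B j).max)).card

/-!
Because `d(f) ≡ 1`, regrouping the trinomial sum defining `a ⋆ d(f)` by `j = u₁ + u₂` and summing
`λ^{u₁}` by the binomial theorem gives `f^{[k+1]}(m+1) = ∑ⱼ C(m,j) (1+λ)ʲ f^{[k]}(j)`, with
`f^{[0]} = δ₀`. The numbers of (generalized) partitions of a finite set `T` into `k` blocks satisfy
the same recursion in `|T|`: removing the block of a fixed `t ∈ T` leaves a partition of some
`A ⊆ T \ {t}` (`λ = 0`). For generalized partitions take `t = max T`: it lies in the last block,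
the other blocks form a generalized partition of some `A ⊆ T \ {t}`, and the last block is
`(T \ A) ∪ D` with `D ⊆ A` arbitrary, whence the factor `2^|A|` (`λ = 1`). Inducting on `k`
over all finite sets `T` at once avoids relabelling subsets of `Fin n` by `Fin |A|`.
-/

open Finset
open scoped Nat

theorem sum_antidiagonal_antidiagonal_assoc {M : Type*} [AddCommMonoid M] (m : ℕ)
    (F : ℕ → ℕ → ℕ → M) :
    ∑ p ∈ antidiagonal m, ∑ q ∈ antidiagonal p.2, F p.1 q.1 q.2 =
      ∑ p ∈ antidiagonal m, ∑ q ∈ antidiagonal p.1, F q.1 q.2 p.2 := by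
  rw [sum_sigma', sum_sigma']
  refine sum_nbij' (fun x => ⟨(x.1.1 + x.2.1, x.2.2), (x.1.1, x.2.1)⟩)
    (fun x => ⟨(x.2.1, x.2.2 + x.1.2), (x.2.2, x.1.2)⟩) ?_ ?_ ?_ ?_ ?_ <;>
  rintro ⟨⟨i, r⟩, ⟨l, s⟩⟩ h <;> simp_all [mem_sigma, HasAntidiagonal.mem_antidiagonal] <;> omega

theorem cast_factorial_div_eq_choose_mul_choose (i l s : ℕ) :
    ((i + l + s)! : ℝ) / (i ! * l ! * s !) = (i + l + s).choose (i + l) * (i + l).choose i := by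
  rw [div_eq_iff (by positivity)]
  have h1 := Nat.add_choose_mul_factorial_mul_factorial (i + l) s
  have h2 := Nat.add_choose_mul_factorial_mul_factorial i l
  rw [← Nat.choose_symm_add] at h1 h2
  rw [← h1, ← h2]
  push_cast
  ring

theorem starMul_apply_of_forall_eq_one (lam : ℝ) (a : ℕ → ℝ) {b : ℕ → ℝ} (hb : ∀ n, b n = 1)
    (m : ℕ) :
    starMul lam a b m = ∑ j ∈ range (m + 1), (m.choose j : ℝ) * (lam + 1) ^ j * a j := by
  rw [starMul, sum_antidiagonal_antidiagonal_assoc m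
    (fun i l s => lam ^ i * ((m ! : ℝ) / (i ! * l ! * s !)) * a (i + l) * b (i + s)),
    ← Nat.sum_antidiagonal_eq_sum_range_succ fun j _ => (m.choose j : ℝ) * (lam + 1) ^ j * a j]
  refine sum_congr rfl fun ⟨j, s⟩ hp => ?_
  rw [HasAntidiagonal.mem_antidiagonal] at hp
  subst hp
  rw [(Commute.one_right lam).add_pow', mul_sum, sum_mul]
  refine sum_congr rfl fun ⟨i, l⟩ hq => ?_
  rw [HasAntidiagonal.mem_antidiagonal] at hq
  subst hq
  simp only [hb, cast_factorial_div_eq_choose_mul_choose, nsmul_eq_mul, one_pow, mul_one]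
  ring

theorem divPow_succ_succ_of_forall_eq_one (lam : ℝ) {f : ℕ → ℝ} (hf : ∀ m, 1 ≤ m → f m = 1)
    (k m : ℕ) :
    divPow lam f (k + 1) (m + 1) =
      ∑ j ∈ range (m + 1), (m.choose j : ℝ) * (lam + 1) ^ j * divPow lam f k j :=
  starMul_apply_of_forall_eq_one lam _ (fun n => hf (n + 1) (Nat.le_add_left 1 n)) m

theorem eq_divPow_card_of_recurrence {α : Type*} [DecidableEq α] (lam : ℝ) {f : ℕ → ℝ}
    (hf : ∀ m, 1 ≤ m → f m = 1) (g : Finset α → ℕ → ℝ)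
    (hzero : ∀ T, g T 0 = if T = ∅ then 1 else 0)
    (hempty : ∀ k, g ∅ (k + 1) = 0)
    (hsucc : ∀ T : Finset α, T.Nonempty → ∃ t ∈ T, ∀ k,
      g T (k + 1) = ∑ A ∈ (T.erase t).powerset, (lam + 1) ^ #A * g A k)
    (k : ℕ) (T : Finset α) : g T k = divPow lam f k #T := by
  induction k generalizing T with
  | zero => simp [hzero, divPow, delta]
  | succ k ih =>
    rcases T.eq_empty_or_nonempty with rfl | hT
    · exact hempty k
    · obtain ⟨t, ht, hrec⟩ := hsucc T hT
      rw [hrec, ← card_erase_add_one ht, divPow_succ_succ_of_forall_eq_one lam hf]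
      simp_rw [ih]
      rw [sum_powerset_apply_card fun j => (lam + 1) ^ j * divPow lam f k j]
      simp only [nsmul_eq_mul, mul_assoc]

section SetPartitions

variable {α : Type*} [DecidableEq α]

def setPartitions (T : Finset α) (k : ℕ) : Finset (Finset (Finset α)) :=
  T.powerset.powerset.filter fun π => #π = k ∧ (∀ B ∈ π, B.Nonempty) ∧
    (∀ B ∈ π, ∀ C ∈ π, B ≠ C → Disjoint B C) ∧ π.biUnion id = T

theorem mem_setPartitions {T : Finset α} {k : ℕ} {π : Finset (Finset α)} :
    π ∈ setPartitions T k ↔ #π = k ∧ (∀ B ∈ π, B.Nonempty) ∧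
      (∀ B ∈ π, ∀ C ∈ π, B ≠ C → Disjoint B C) ∧ π.biUnion id = T := by
  simp only [setPartitions, mem_filter, mem_powerset, and_iff_right_iff_imp]
  rintro ⟨-, -, -, rfl⟩ B hB
  exact mem_powerset.2 (subset_biUnion_of_mem id hB)

theorem stirling2_eq_card_setPartitions (n k : ℕ) :
    stirling2 n k = #(setPartitions (univ : Finset (Fin n)) k) := by
  simp only [stirling2, setPartitions, powerset_univ]
  congr

theorem card_setPartitions_zero (T : Finset α) :
    #(setPartitions T 0) = if T = ∅ then 1 else 0 := by
  have : setPartitions T 0 = if T = ∅ then {∅} else ∅ := by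
    ext π
    split_ifs with hT <;> simp only [mem_setPartitions, card_eq_zero, mem_singleton,
      notMem_empty, iff_false, not_and] <;> aesop
  rw [this]
  split_ifs <;> rfl

theorem setPartitions_empty_succ (k : ℕ) : setPartitions (∅ : Finset α) (k + 1) = ∅ := by
  refine eq_empty_of_forall_notMem fun π hπ => ?_
  obtain ⟨hcard, hne, -, hcover⟩ := mem_setPartitions.1 hπ
  obtain ⟨B, hB⟩ := card_pos.1 (hcard ▸ k.succ_pos : 0 < #π)
  obtain ⟨x, hx⟩ := hne B hB
  simpa [hcover] using (mem_biUnion (t := id)).2 ⟨B, hB, hx⟩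

theorem insert_filter_notMem_eq {π : Finset (Finset α)} {B : Finset α} {t : α}
    (hdisj : ∀ B ∈ π, ∀ C ∈ π, B ≠ C → Disjoint B C) (hB : B ∈ π) (htB : t ∈ B) :
    insert B (π.filter (t ∉ ·)) = π := by
  ext C
  simp only [mem_insert, mem_filter]
  constructor
  · rintro (rfl | ⟨hC, -⟩) <;> assumption
  · intro hC
    by_cases htC : t ∈ C
    · exact .inl (by_contra fun h => disjoint_left.1 (hdisj C hC B hB h) htC htB)
    · exact .inr ⟨hC, htC⟩

theorem eq_sdiff_biUnion_filter_notMem {T B : Finset α} {π : Finset (Finset α)} {t : α}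
    (hdisj : ∀ B ∈ π, ∀ C ∈ π, B ≠ C → Disjoint B C) (hcover : π.biUnion id = T) (hB : B ∈ π)
    (htB : t ∈ B) : B = T \ (π.filter (t ∉ ·)).biUnion id := by
  have hdisjR : Disjoint B ((π.filter (t ∉ ·)).biUnion id) := by
    refine (disjoint_biUnion_right _ _ _).2 fun C hC => ?_
    rw [mem_filter] at hC
    exact hdisj B hB C hC.1 fun h => hC.2 (h ▸ htB)
  have hunion : B ∪ (π.filter (t ∉ ·)).biUnion id = T := by
    rw [← hcover]
    conv_rhs => rw [← insert_filter_notMem_eq hdisj hB htB, biUnion_insert]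
    rfl
  rw [← hunion, union_sdiff_cancel_right hdisjR]

theorem filter_notMem_insert {π : Finset (Finset α)} {B : Finset α} {t : α} (htB : t ∈ B)
    (hπ : ∀ C ∈ π, t ∉ C) : (insert B π).filter (t ∉ ·) = π := by
  rw [filter_insert, if_neg (not_not.2 htB), filter_true_of_mem hπ]

theorem filter_notMem_mem_setPartitions {T : Finset α} {t : α} (ht : t ∈ T) {k : ℕ}
    {π : Finset (Finset α)} (hπ : π ∈ setPartitions T (k + 1)) :
    π.filter (t ∉ ·) ∈ setPartitions ((π.filter (t ∉ ·)).biUnion id) k := by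
  obtain ⟨hcard, hne, hdisj, hcover⟩ := mem_setPartitions.1 hπ
  obtain ⟨B, hB, htB⟩ := mem_biUnion.1 (hcover ▸ ht)
  have hBF : B ∉ π.filter (t ∉ ·) := fun h => (mem_filter.1 h).2 htB
  have hcard' := congrArg card (insert_filter_notMem_eq hdisj hB htB)
  rw [card_insert_of_notMem hBF] at hcard'
  exact mem_setPartitions.2 ⟨by omega, fun C hC => hne C (mem_filter.1 hC).1,
    fun C hC D hD => hdisj C (mem_filter.1 hC).1 D (mem_filter.1 hD).1, rfl⟩

theorem insert_sdiff_mem_setPartitions {T A : Finset α} {t : α} (ht : t ∈ T)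
    (hA : A ⊆ T.erase t) {k : ℕ} {π : Finset (Finset α)} (hπ : π ∈ setPartitions A k) :
    insert (T \ A) π ∈ setPartitions T (k + 1) := by
  obtain ⟨hcard, hne, hdisj, hcover⟩ := mem_setPartitions.1 hπ
  have htA : t ∉ A := fun h => (mem_erase.1 (hA h)).1 rfl
  have htTA : t ∈ T \ A := mem_sdiff.2 ⟨ht, htA⟩
  have hsub : ∀ C ∈ π, C ⊆ A := fun C hC => hcover ▸ subset_biUnion_of_mem id hC
  have hdisjA : ∀ C ∈ π, Disjoint (T \ A) C := fun C hC =>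
    disjoint_sdiff_self_left.mono_right (hsub C hC)
  refine mem_setPartitions.2 ⟨?_, ?_, ?_, ?_⟩
  · rw [card_insert_of_notMem fun h => htA (hsub _ h htTA), hcard]
  · exact forall_mem_insert _ _ _ |>.2 ⟨⟨t, htTA⟩, hne⟩
  · simp only [forall_mem_insert]
    exact ⟨⟨fun h => absurd rfl h, fun C hC _ => hdisjA C hC⟩,
      fun B hB => ⟨fun _ => (hdisjA B hB).symm, hdisj B hB⟩⟩
  · rw [biUnion_insert, id, hcover, sdiff_union_of_subset (hA.trans (erase_subset t T))]

theorem card_filter_setPartitions_eq {T A : Finset α} {t : α} (ht : t ∈ T)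
    (hA : A ⊆ T.erase t) (k : ℕ) :
    #{π ∈ setPartitions T (k + 1) | (π.filter (t ∉ ·)).biUnion id = A} =
      #(setPartitions A k) := by
  have htA : t ∉ A := fun h => (mem_erase.1 (hA h)).1 rfl
  have htTA : t ∈ T \ A := mem_sdiff.2 ⟨ht, htA⟩
  have htπ {π} (hπ : π ∈ setPartitions A k) : ∀ C ∈ π, t ∉ C := fun C hC h =>
    htA ((mem_setPartitions.1 hπ).2.2.2 ▸ subset_biUnion_of_mem id hC h)
  refine card_nbij' (·.filter (t ∉ ·)) (insert (T \ A)) (fun π hπ => ?_) (fun π hπ => ?_)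
    (fun π hπ => ?_) (fun π hπ => filter_notMem_insert htTA (htπ hπ))
  · obtain ⟨hπT, rfl⟩ := mem_filter.1 hπ
    exact filter_notMem_mem_setPartitions ht hπT
  · refine mem_filter.2 ⟨insert_sdiff_mem_setPartitions ht hA hπ, ?_⟩
    rw [filter_notMem_insert htTA (htπ hπ), (mem_setPartitions.1 hπ).2.2.2]
  · obtain ⟨hπT, rfl⟩ := mem_filter.1 hπ
    obtain ⟨-, -, hdisj, hcover⟩ := mem_setPartitions.1 hπT
    obtain ⟨B, hB, htB⟩ := mem_biUnion.1 (hcover ▸ ht)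
    rw [← hcover, ← eq_sdiff_biUnion_filter_notMem hdisj rfl hB htB]
    exact insert_filter_notMem_eq hdisj hB htB

theorem card_setPartitions_succ {T : Finset α} {t : α} (ht : t ∈ T) (k : ℕ) :
    #(setPartitions T (k + 1)) = ∑ A ∈ (T.erase t).powerset, #(setPartitions A k) := by
  refine (card_eq_sum_card_fiberwise fun π hπ => ?_).trans
    (sum_congr rfl fun A hA => card_filter_setPartitions_eq ht (mem_powerset.1 hA) k)
  obtain ⟨-, -, -, hcover⟩ := mem_setPartitions.1 hπ
  refine mem_powerset.2 fun x hx => ?_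
  obtain ⟨C, hC, hxC⟩ := mem_biUnion.1 hx
  obtain ⟨hCπ, htC⟩ := mem_filter.1 hC
  exact mem_erase.2 ⟨fun h => htC (h ▸ hxC), hcover ▸ mem_biUnion.2 ⟨C, hCπ, hxC⟩⟩

end SetPartitions

section GenPartitions

variable {α : Type*} [LinearOrder α]

def genPartitions (T : Finset α) (k : ℕ) : Finset (Fin k → Finset α) :=
  (Fintype.piFinset fun _ => T.powerset).filter fun B => (∀ i, (B i).Nonempty) ∧
    univ.biUnion B = T ∧ ∀ i j : Fin k, i < j → (B i).max < (B j).max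

theorem mem_genPartitions {T : Finset α} {k : ℕ} {B : Fin k → Finset α} :
    B ∈ genPartitions T k ↔ (∀ i, (B i).Nonempty) ∧ univ.biUnion B = T ∧
      ∀ i j : Fin k, i < j → (B i).max < (B j).max := by
  simp only [genPartitions, mem_filter, Fintype.mem_piFinset, mem_powerset,
    and_iff_right_iff_imp]
  rintro ⟨-, rfl, -⟩ i
  exact subset_biUnion_of_mem B (mem_univ i)

theorem gstirling_eq_card_genPartitions (n k : ℕ) :
    gstirling n k = #(genPartitions (univ : Finset (Fin n)) k) := by
  simp only [gstirling, genPartitions, powerset_univ, Fintype.piFinset_univ]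

theorem card_genPartitions_zero (T : Finset α) :
    #(genPartitions T 0) = if T = ∅ then 1 else 0 := by
  have : genPartitions T 0 = if T = ∅ then univ else ∅ := by
    ext B
    split_ifs with hT <;> simp [mem_genPartitions, eq_comm, hT, Unique.eq_default B]
  rw [this]
  split_ifs <;> rfl

theorem genPartitions_empty_succ (k : ℕ) : genPartitions (∅ : Finset α) (k + 1) = ∅ := by
  refine eq_empty_of_forall_notMem fun B hB => ?_
  obtain ⟨hne, hcover, -⟩ := mem_genPartitions.1 hB
  obtain ⟨x, hx⟩ := hne 0
  simpa [hcover] using mem_biUnion.2 ⟨0, mem_univ _, hx⟩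

theorem biUnion_univ_fin_succ {k : ℕ} (B : Fin (k + 1) → Finset α) :
    univ.biUnion B = univ.biUnion (Fin.init B) ∪ B (Fin.last k) := by
  ext x
  simp [Fin.exists_fin_succ', Fin.init]

theorem max_lt_max_of_forall_lt_of_mem {s u : Finset α} {t : α} (hs : ∀ x ∈ s, x < t)
    (hu : t ∈ u) : s.max < u.max :=
  ((Finset.sup_lt_iff (WithBot.bot_lt_coe t)).2 fun x hx => WithBot.coe_lt_coe.2 (hs x hx)).trans_le
    (le_max hu)

theorem notMem_init_of_mem_genPartitions {T : Finset α} {t : α} (htop : ∀ x ∈ T, x ≤ t)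
    {k : ℕ} {B : Fin (k + 1) → Finset α} (hB : B ∈ genPartitions T (k + 1)) (i : Fin k) :
    t ∉ B i.castSucc := by
  obtain ⟨-, hcover, hmax⟩ := mem_genPartitions.1 hB
  intro htB
  have hlast : (B (Fin.last k)).max ≤ t := Finset.max_le fun x hx =>
    WithBot.coe_le_coe.2 (htop x (hcover ▸ subset_biUnion_of_mem B (mem_univ _) hx))
  exact ((le_max htB).trans_lt (hmax _ _ (Fin.castSucc_lt_last i))).not_ge hlast

theorem snoc_sdiff_union_mem_genPartitions {T A D : Finset α} {t : α} (ht : t ∈ T)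
    (htop : ∀ x ∈ T, x ≤ t) (hA : A ⊆ T.erase t) (hD : D ⊆ A) {k : ℕ} {C : Fin k → Finset α}
    (hC : C ∈ genPartitions A k) :
    Fin.snoc (α := fun _ => Finset α) C ((T \ A) ∪ D) ∈ genPartitions T (k + 1) := by
  obtain ⟨hne, hcover, hmax⟩ := mem_genPartitions.1 hC
  have hAT : A ⊆ T := hA.trans (erase_subset t T)
  have htX : t ∈ (T \ A) ∪ D :=
    mem_union_left _ (mem_sdiff.2 ⟨ht, fun h => ne_of_mem_erase (hA h) rfl⟩)
  refine mem_genPartitions.2 ⟨fun i => ?_, ?_, fun i j hij => ?_⟩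
  · induction i using Fin.lastCases with
    | last => exact ⟨t, by simpa using htX⟩
    | cast i => simpa using hne i
  · rw [biUnion_univ_fin_succ, Fin.init_snoc, Fin.snoc_last, hcover, ← union_assoc,
      union_sdiff_of_subset hAT, union_eq_left.2 (hD.trans hAT)]
  · induction j using Fin.lastCases with
    | last =>
      induction i using Fin.lastCases with
      | last => exact absurd hij (lt_irrefl _)
      | cast i =>
        rw [Fin.snoc_castSucc, Fin.snoc_last]
        refine max_lt_max_of_forall_lt_of_mem (fun x hx => ?_) htX
        have hx' := hA (hcover ▸ subset_biUnion_of_mem C (mem_univ i) hx)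
        exact lt_of_le_of_ne (htop x (mem_of_mem_erase hx')) (ne_of_mem_erase hx')
    | cast j =>
      induction i using Fin.lastCases with
      | last => exact absurd hij (Fin.castSucc_lt_last j).not_gt
      | cast i =>
        rw [Fin.snoc_castSucc, Fin.snoc_castSucc]
        exact hmax i j (Fin.castSucc_lt_castSucc_iff.1 hij)

theorem card_filter_genPartitions_eq {T A : Finset α} {t : α} (ht : t ∈ T)
    (htop : ∀ x ∈ T, x ≤ t) (hA : A ⊆ T.erase t) (k : ℕ) :
    #{B ∈ genPartitions T (k + 1) | univ.biUnion (Fin.init B) = A} =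
      2 ^ #A * #(genPartitions A k) := by
  rw [mul_comm, ← card_powerset, ← card_product]
  refine card_nbij' (fun B => (Fin.init B, B (Fin.last k) ∩ A))
    (fun CD => Fin.snoc (α := fun _ => Finset α) CD.1 ((T \ A) ∪ CD.2))
    (fun B hB => ?_) (fun CD hCD => ?_) (fun B hB => ?_) (fun CD hCD => ?_)
  · obtain ⟨hBT, rfl⟩ := mem_filter.1 hB
    obtain ⟨hne, -, hmax⟩ := mem_genPartitions.1 hBT
    refine mem_product.2 ⟨mem_genPartitions.2 ⟨fun i => hne _, rfl, fun i j hij =>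
      hmax _ _ (Fin.castSucc_lt_castSucc_iff.2 hij)⟩, mem_powerset.2 inter_subset_right⟩
  · obtain ⟨hC, hD⟩ := mem_product.1 hCD
    refine mem_filter.2 ⟨snoc_sdiff_union_mem_genPartitions ht htop hA (mem_powerset.1 hD) hC, ?_⟩
    rw [Fin.init_snoc, (mem_genPartitions.1 hC).2.1]
  · obtain ⟨hBT, rfl⟩ := mem_filter.1 hB
    have hcover := (mem_genPartitions.1 hBT).2.1
    rw [biUnion_univ_fin_succ] at hcover
    dsimp only
    conv_rhs => rw [← Fin.snoc_init_self B]
    rw [← hcover, union_sdiff_left, sdiff_union_inter]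
  · have hD := mem_powerset.1 (mem_product.1 hCD).2
    simp only [Fin.init_snoc, Fin.snoc_last, union_inter_distrib_right, sdiff_inter_self,
      empty_union, inter_eq_left.2 hD]

theorem card_genPartitions_succ {T : Finset α} {t : α} (ht : t ∈ T) (htop : ∀ x ∈ T, x ≤ t)
    (k : ℕ) :
    #(genPartitions T (k + 1)) = ∑ A ∈ (T.erase t).powerset, 2 ^ #A * #(genPartitions A k) := by
  refine (card_eq_sum_card_fiberwise fun B hB => ?_).trans
    (sum_congr rfl fun A hA => card_filter_genPartitions_eq ht htop (mem_powerset.1 hA) k)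
  obtain ⟨-, hcover, -⟩ := mem_genPartitions.1 hB
  refine mem_powerset.2 fun x hx => ?_
  obtain ⟨i, -, hxB⟩ := mem_biUnion.1 hx
  exact mem_erase.2 ⟨fun h => notMem_init_of_mem_genPartitions htop hB i (h ▸ hxB),
    hcover ▸ mem_biUnion.2 ⟨i.castSucc, mem_univ _, hxB⟩⟩

end GenPartitions

theorem divPow_zero_eq_stirling2 {f : ℕ → ℝ} (hf : ∀ m, 1 ≤ m → f m = 1) (k n : ℕ) :
    divPow 0 f k n = stirling2 n k := by
  have key := eq_divPow_card_of_recurrence 0 hf (fun T k => (#(setPartitions T k) : ℝ))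
    (fun T => by simp [card_setPartitions_zero]) (fun k => by simp [setPartitions_empty_succ])
    (fun T ⟨t, ht⟩ => ⟨t, ht, fun k => by simp [card_setPartitions_succ ht]⟩) k
    (univ : Finset (Fin n))
  rw [stirling2_eq_card_setPartitions, key, card_univ, Fintype.card_fin]

theorem divPow_one_eq_gstirling {f : ℕ → ℝ} (hf : ∀ m, 1 ≤ m → f m = 1) (k n : ℕ) :
    divPow 1 f k n = gstirling n k := by
  have key := eq_divPow_card_of_recurrence 1 hf (fun T k => (#(genPartitions T k) : ℝ))
    (fun T => by simp [card_genPartitions_zero]) (fun k => by simp [genPartitions_empty_succ])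
    (fun T hT => ⟨T.max' hT, T.max'_mem hT, fun k => by
      simp [card_genPartitions_succ (T.max'_mem hT) (T.le_max' · ·), one_add_one_eq_two]⟩) k
    (univ : Finset (Fin n))
  rw [gstirling_eq_card_genPartitions, key, card_univ, Fintype.card_fin]

theorem stmt16_general (lam : ℝ) (f : ℕ → ℝ) (hf : ∀ m : ℕ, 1 ≤ m → f m = 1)
    (k n : ℕ) :
    (lam = 0 → divPow lam f k n = (stirling2 n k : ℝ)) ∧
    (lam = 1 → divPow lam f k n = (gstirling n k : ℝ)) := by
  refine ⟨?_, ?_⟩ <;> rintro rfl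
  · exact divPow_zero_eq_stirling2 hf k n
  · exact divPow_one_eq_gstirling hf k n

/-- If `f(m) = 1` for all `m ≥ 1`, then for `k, n ≥ 1`: for weight `lam = 0` the `k`-th
divided power satisfies `f^{[k]}(n) = S(n,k)`, and for `lam = 1` it satisfies
`f^{[k]}(n) = \overline{S}(n,k)`. -/
theorem stmt16 (lam : ℝ) (f : ℕ → ℝ) (hf : ∀ m : ℕ, 1 ≤ m → f m = 1)
    (k n : ℕ) (hk : 1 ≤ k) (hn : 1 ≤ n) :
    (lam = 0 → divPow lam f k n = (stirling2 n k : ℝ)) ∧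
    (lam = 1 → divPow lam f k n = (gstirling n k : ℝ)) :=
  stmt16_general lam f hf k n
end
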